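/- Let k ≥ 3 be odd and let T be a tree on n vertices of diameter at least k + 3. Then mdi_k(T) > f_k(n). -/

import Mathlib

/-!
Work relative to a vertex set `S`: count the sets `J ⊆ S` that are distance-`k` independent and
dominate `S` at distance `k`. If `x ∈ S` is a vertex of `S` farthest from some vertex `r`, the
vertices of `S` within distance `k` of `x` are pairwise within distance `k` (a tree property),
so every such `J` contains exactly one of them; those containing `x` come from the sets for `S`
minus this ball, and every other vertex of the ball lies in at least one. Induction then gives
`mdi_k(S) + α_k(S) ≥ |S| + 1`, where `α_k` is the largest size of a distance-`k` independent
set. For the whole tree, take `x` an end of a diametral path `x = P 0, P 1, …`: the vertex `P 1`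
lies in two different maximal sets (one through `P (k+2)`, one through `P (k+3)`), which improves
the bound to `mdi_k(T) + α_k(T) ≥ n + 2`. For `k = 2m+1` the balls of radius `m` around a
distance-`k` independent set are disjoint, have at least `m + 1` vertices each, and miss some
vertex, so `α_k(T) (m + 1) + 1 ≤ n`; together,
`mdi_k(T) ≥ n + 2 - ⌊(n - 1)/(m + 1)⌋ = f_k(n) + 1`.
-/

/-- `J` is a distance-`k` independent set in `G`: any two distinct vertices of `J`
are at graph distance at least `k + 1`. -/
def DkIndep {V : Type*} (G : SimpleGraph V) (k : ℕ) (J : Set V) : Prop :=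
  ∀ ⦃u⦄, u ∈ J → ∀ ⦃v⦄, v ∈ J → u ≠ v → k + 1 ≤ G.dist u v

/-- `J` is a maximal distance-`k` independent set (`k`-MDIS) of `G`. -/
def MaxDkIndep {V : Type*} (G : SimpleGraph V) (k : ℕ) (J : Set V) : Prop :=
  DkIndep G k J ∧ ∀ J', DkIndep G k J' → J ⊆ J' → J' = J

/-- `mdi G k` is the number of maximal distance-`k` independent sets of `G`. -/
noncomputable def mdi {V : Type*} (G : SimpleGraph V) (k : ℕ) : ℕ :=
  {J : Set V | MaxDkIndep G k J}.ncard

/-- `f_k(n)` from the paper. -/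
def fk (k n : ℕ) : ℕ :=
  if n ≤ k + 1 then n else n - (n - k % 2) / (k / 2 + 1) + 1

/-- closed ball `N_k[x]`. -/
def ball {V : Type*} (G : SimpleGraph V) (k : ℕ) (x : V) : Set V :=
  {v | G.dist x v ≤ k}

/-- a leaf is a vertex of degree 1. -/
def IsLeaf {V : Type*} (G : SimpleGraph V) (v : V) : Prop :=
  (G.neighborSet v).ncard = 1

/-- eccentricity of a vertex. -/
noncomputable def ecc {V : Type*} [Fintype V] (G : SimpleGraph V) (v : V) : ℕ :=
  Finset.univ.sup (G.dist v)

/-- diameter of a finite graph. -/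
noncomputable def gdiam {V : Type*} [Fintype V] (G : SimpleGraph V) : ℕ :=
  Finset.univ.sup (ecc G)

/-- a central vertex is one of minimum eccentricity. -/
def IsCentral {V : Type*} [Fintype V] (G : SimpleGraph V) (v : V) : Prop :=
  ∀ u, ecc G v ≤ ecc G u

/-- a `k`-twin: some other vertex has the same closed `k`-ball. -/
def KTwin {V : Type*} (G : SimpleGraph V) (k : ℕ) (u : V) : Prop :=
  ∃ v, v ≠ u ∧ ball G k u = ball G k v

/-- a diametral leaf: a leaf whose eccentricity equals the diameter. -/
def IsDiametralLeaf {V : Type*} [Fintype V] (G : SimpleGraph V) (u : V) : Prop :=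
  IsLeaf G u ∧ ecc G u = gdiam G

/-- a `k`-special pair. -/
def KSpecial {V : Type*} [Fintype V] (G : SimpleGraph V) (k : ℕ) (x y : V) : Prop :=
  IsDiametralLeaf G x ∧ IsDiametralLeaf G y ∧ KTwin G k x ∧ KTwin G k y ∧
    ball G k x ≠ ball G k y

/-- `mdi*_k(G, ℓ)`. -/
noncomputable def mdiStar {V : Type*} (G : SimpleGraph V) (k : ℕ) (ℓ : V) : ℕ :=
  {J : Set V | MaxDkIndep G k J ∧ ℓ ∈ J ∧ ∃ w ∉ J, ball G k w ∩ J = {ℓ}}.ncard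

/-- The spider tree `S_{p,m}`: a center (`none`) together with `p` legs of `m` vertices. -/
def spider (p m : ℕ) : SimpleGraph (Option (Fin p × Fin m)) :=
  SimpleGraph.fromRel fun a b =>
    match a, b with
    | none, some (_, j) => (j : ℕ) = 0
    | some (i, j), some (i', j') => i = i' ∧ (j : ℕ) + 1 = (j' : ℕ)
    | _, _ => False

/-- `S'_{p,m}`: the spider `S_{p,m}` with one leaf at distance `m` from the center removed. -/
def spider' (p m : ℕ) (hp : 0 < p) (hm : 0 < m) :=
  (spider p m).induce
    {v | v ≠ some (⟨0, hp⟩, ⟨m - 1, Nat.sub_lt hm Nat.one_pos⟩)}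

/-- The double spider `B_{p₁,p₂,s}`: two adjacent centers (`Sum.inl false`, `Sum.inl true`),
with `p₁` legs of `s` vertices on the first and `p₂` legs of `s` vertices on the second. -/
def btree (p₁ p₂ s : ℕ) : SimpleGraph (Bool ⊕ ((Fin p₁ ⊕ Fin p₂) × Fin s)) :=
  SimpleGraph.fromRel fun a b =>
    match a, b with
    | Sum.inl x, Sum.inl y => x ≠ y
    | Sum.inl false, Sum.inr (Sum.inl _, j) => (j : ℕ) = 0
    | Sum.inl true, Sum.inr (Sum.inr _, j) => (j : ℕ) = 0
    | Sum.inr (c, j), Sum.inr (c', j') => c = c' ∧ (j : ℕ) + 1 = (j' : ℕ)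
    | _, _ => False

/-- `G` contains a subgraph isomorphic to `H`. -/
def ContainsSub {V W : Type*} (G : SimpleGraph V) (H : SimpleGraph W) : Prop :=
  ∃ f : W → V, Function.Injective f ∧ ∀ a b, H.Adj a b → G.Adj (f a) (f b)

/-- A pendant path on `s` vertices `P 0, …, P (s-1)` attached to `w`:
`P 0` is a leaf, consecutive vertices are adjacent, interior vertices have degree 2,
and `P (s-1)` is adjacent to `w`. -/
def IsPendantPath {V : Type*} (T : SimpleGraph V) (s : ℕ) (P : ℕ → V) (w : V) : Prop :=
  Set.InjOn P (Set.Iio s) ∧ (∀ i < s, P i ≠ w) ∧ IsLeaf T (P 0) ∧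
    (∀ i, i + 1 < s → T.Adj (P i) (P (i + 1))) ∧
    (∀ i, 0 < i → i < s → (T.neighborSet (P i)).ncard = 2) ∧
    T.Adj (P (s - 1)) w

/-- Isomorphism of simple graphs on `Fin n` as a setoid. -/
def graphSetoid (n : ℕ) : Setoid (SimpleGraph (Fin n)) where
  r G H := Nonempty (G ≃g H)
  iseqv := ⟨fun _ => ⟨SimpleGraph.Iso.refl⟩, fun ⟨e⟩ => ⟨e.symm⟩, fun ⟨e⟩ ⟨f⟩ => ⟨e.trans f⟩⟩

/-- The number of isomorphism classes of graphs in a set of graphs on `Fin n`. -/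
noncomputable def numIsoClasses {n : ℕ} (S : Set (SimpleGraph (Fin n))) : ℕ :=
  ((fun G => Quotient.mk (graphSetoid n) G) '' S).ncard

namespace SimpleGraph

variable {V : Type*} {G : SimpleGraph V}

lemma Walk.dist_getVert_getVert {u v : V} {p : G.Walk u v} (hp : p.length = G.dist u v)
    {i j : ℕ} (hij : i ≤ j) (hj : j ≤ p.length) :
    G.dist (p.getVert i) (p.getVert j) = j - i := by
  have h := length_eq_dist_of_subwalk hp ((isSubwalk_take _ (j - i)).trans (isSubwalk_drop p i))
  rw [take_length, drop_length, drop_getVert, Nat.add_sub_cancel' hij] at h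
  omega

lemma Walk.dist_add_dist_of_mem_support {u v w : V} {p : G.Walk u v}
    (hp : p.length = G.dist u v) (hw : w ∈ p.support) :
    G.dist u w + G.dist w v = G.dist u v := by
  obtain ⟨i, rfl, hi⟩ := mem_support_iff_exists_getVert.mp hw
  have hstart := p.dist_getVert_getVert hp i.zero_le hi
  have hend := p.dist_getVert_getVert hp hi le_rfl
  rw [getVert_zero] at hstart
  rw [getVert_length] at hend
  omega

lemma Walk.IsPath.append_of_support_inter {u v w : V} {p : G.Walk u w} {q : G.Walk w v}
    (hp : p.IsPath) (hq : q.IsPath) (h : ∀ z ∈ p.support, z ∈ q.support → z = w) :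
    (p.append q).IsPath := by
  rw [isPath_def, support_append]
  refine hp.support_nodup.append hq.support_nodup.tail fun z hzp hzq => ?_
  obtain rfl := h z hzp (List.mem_of_mem_tail hzq)
  have hnodup := hq.support_nodup
  rw [← cons_tail_support] at hnodup
  exact (List.nodup_cons.mp hnodup).1 hzq

lemma IsTree.length_eq_dist_of_isPath (hT : G.IsTree) {u v : V} {p : G.Walk u v}
    (hp : p.IsPath) : p.length = G.dist u v := by
  obtain ⟨q, hq, hqd⟩ := hT.connected.exists_path_of_dist u v
  obtain rfl : p = q :=
    congrArg Subtype.val ((hT.isAcyclic.subsingleton_path u v).elim ⟨p, hp⟩ ⟨q, hq⟩)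
  exact hqd

lemma IsTree.exists_median (hT : G.IsTree) {a b : V} {P : G.Walk a b}
    (hP : P.length = G.dist a b) (u : V) :
    ∃ m ∈ P.support, G.dist a u = G.dist a m + G.dist m u ∧
      G.dist b u = G.dist b m + G.dist m u := by
  classical
  have hPpath := P.isPath_of_length_eq_dist hP
  obtain ⟨m, hmP, hmin⟩ := P.support.toFinset.exists_min_image (G.dist u)
    ⟨a, List.mem_toFinset.mpr P.start_mem_support⟩
  rw [List.mem_toFinset] at hmP
  obtain ⟨q, hq, hqd⟩ := hT.connected.exists_path_of_dist u m
  -- `m` is the vertex of `P` closest to `u`, so a geodesic from `u` to `m` meets `P` only at `m`.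
  have hmeet : ∀ z ∈ q.support, z ∈ P.support → z = m := fun z hzq hzP => by
    have hsplit := q.dist_add_dist_of_mem_support hqd hzq
    have := hmin z (List.mem_toFinset.mpr hzP)
    exact (hT.connected.dist_eq_zero_iff).mp (by omega)
  have ha := hT.length_eq_dist_of_isPath <| hq.append_of_support_inter
    (hPpath.takeUntil hmP).reverse fun z hzq hz => hmeet z hzq <|
      P.support_takeUntil_subset_support hmP (by rwa [Walk.support_reverse, List.mem_reverse] at hz)
  have hb := hT.length_eq_dist_of_isPath <| hq.append_of_support_inter
    (hPpath.dropUntil hmP) fun z hzq hz => hmeet z hzq (P.support_dropUntil_subset_support hmP hz)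
  rw [Walk.length_append, Walk.length_reverse, hqd,
    hT.length_eq_dist_of_isPath (hPpath.takeUntil hmP)] at ha
  rw [Walk.length_append, hqd, hT.length_eq_dist_of_isPath (hPpath.dropUntil hmP)] at hb
  refine ⟨m, hmP, ?_, ?_⟩ <;> simp only [G.dist_comm] at ha hb ⊢ <;> omega

lemma IsTree.dist_le_max_of_dist_le (hT : G.IsTree) {r x u w : V} (hu : G.dist r u ≤ G.dist r x)
    (hw : G.dist r w ≤ G.dist r x) : G.dist u w ≤ max (G.dist x u) (G.dist x w) := by
  obtain ⟨P, hP⟩ := hT.connected.exists_walk_length_eq_dist x r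
  obtain ⟨s, hsP, hxu, hru⟩ := hT.exists_median hP u
  obtain ⟨t, htP, hxw, hrw⟩ := hT.exists_median hP w
  obtain ⟨i, rfl, hi⟩ := Walk.mem_support_iff_exists_getVert.mp hsP
  obtain ⟨j, rfl, hj⟩ := Walk.mem_support_iff_exists_getVert.mp htP
  have hxs := P.dist_getVert_getVert hP i.zero_le hi
  have hxt := P.dist_getVert_getVert hP j.zero_le hj
  have hsr := P.dist_getVert_getVert hP hi le_rfl
  have htr := P.dist_getVert_getVert hP hj le_rfl
  rw [Walk.getVert_zero] at hxs hxt
  rw [Walk.getVert_length] at hsr htr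
  have hus := hT.connected.dist_triangle (u := u) (v := P.getVert i) (w := w)
  have htw := hT.connected.dist_triangle (u := u) (v := P.getVert j) (w := w)
  rcases le_total i j with hij | hji
  · have hst := P.dist_getVert_getVert hP hij hj
    have := hT.connected.dist_triangle (u := P.getVert i) (v := P.getVert j) (w := w)
    simp only [G.dist_comm] at *
    omega
  · have hts := P.dist_getVert_getVert hP hji hi
    have := hT.connected.dist_triangle (u := P.getVert j) (v := P.getVert i) (w := u)
    simp only [G.dist_comm] at *
    omega

end SimpleGraph

open Finset

section DistanceIndependence

variable {V : Type*} (G : SimpleGraph V) (k : ℕ)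

-- Distances are those of `G`, not of the subgraph induced by `S`.
def IsMaxDkIndepIn (S : Finset V) (J : Set V) : Prop :=
  J ⊆ S ∧ DkIndep G k J ∧ ∀ v ∈ S, ∃ j ∈ J, G.dist v j ≤ k

noncomputable def mdiIn (S : Finset V) : ℕ :=
  {J | IsMaxDkIndepIn G k S J}.ncard

noncomputable def mdiInContaining (S : Finset V) (c : V) : ℕ :=
  {J | IsMaxDkIndepIn G k S J ∧ c ∈ J}.ncard

variable {G k}

lemma DkIndep.insert {J : Set V} {v : V} (hJ : DkIndep G k J) (hv : ∀ j ∈ J, k < G.dist v j) :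
    DkIndep G k (insert v J) := by
  rintro a (rfl | ha) b (rfl | hb) hab
  · exact absurd rfl hab
  · exact hv b hb
  · exact G.dist_comm (u := a) ▸ hv a ha
  · exact hJ ha hb hab

lemma Set.Subsingleton.dkIndep {J : Set V} (hJ : J.Subsingleton) : DkIndep G k J :=
  fun _ hu _ hv huv => absurd (hJ hu hv) huv

lemma dkIndep_pair {a b : V} (hab : k < G.dist a b) : DkIndep G k {a, b} :=
  (Set.subsingleton_singleton.dkIndep).insert (by simpa using hab)

lemma DkIndep.exists_isMaxDkIndepIn [Finite V] {S : Finset V} {I : Set V} (hI : DkIndep G k I)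
    (hIS : I ⊆ S) : ∃ J, IsMaxDkIndepIn G k S J ∧ I ⊆ J := by
  obtain ⟨J, hIJ, hJ⟩ :=
    Finite.exists_le_maximal (p := fun J : Set V => J ⊆ S ∧ DkIndep G k J) ⟨hIS, hI⟩
  refine ⟨J, ⟨hJ.prop.1, hJ.prop.2, fun v hv => ?_⟩, hIJ⟩
  by_contra! hfar
  have hvJ : v ∈ J := hJ.le_of_ge ⟨Set.insert_subset hv hJ.prop.1, hJ.prop.2.insert hfar⟩
    (Set.subset_insert v J) (Set.mem_insert v J)
  simpa using hfar v hvJ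

lemma isMaxDkIndepIn_univ_iff [Fintype V] {J : Set V} :
    IsMaxDkIndepIn G k univ J ↔ MaxDkIndep G k J := by
  refine ⟨fun ⟨_, hJ, hdom⟩ => ⟨hJ, fun J' hJ' hJJ' => ?_⟩, fun ⟨hJ, hmax⟩ => ?_⟩
  · refine Set.Subset.antisymm (fun v hv => ?_) hJJ'
    obtain ⟨j, hj, hvj⟩ := hdom v (mem_univ v)
    by_contra hvJ
    exact absurd (hJ' hv (hJJ' hj) (fun h => hvJ (h ▸ hj))) (by omega)
  · refine ⟨by simp, hJ, fun v _ => ?_⟩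
    by_contra! hfar
    have hvJ : v ∈ J := hmax _ (hJ.insert hfar) (Set.subset_insert v J) ▸ Set.mem_insert v J
    simpa using hfar v hvJ

lemma mdi_eq_mdiIn_univ [Fintype V] : mdi G k = mdiIn G k univ := by
  simp only [mdi, mdiIn, isMaxDkIndepIn_univ_iff]

lemma IsMaxDkIndepIn.insert {S : Finset V} {x : V} {J : Set V} (hx : x ∈ S)
    (hJ : IsMaxDkIndepIn G k {v ∈ S | k < G.dist x v} J) : IsMaxDkIndepIn G k S (insert x J) := by
  obtain ⟨hJS, hJ, hdom⟩ := hJ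
  have hfar : ∀ j ∈ J, k < G.dist x j := fun j hj => (mem_filter.mp (hJS hj)).2
  refine ⟨Set.insert_subset hx fun j hj => (mem_filter.mp (hJS hj)).1, hJ.insert hfar,
    fun v hv => ?_⟩
  by_cases hxv : G.dist x v ≤ k
  · exact ⟨x, Set.mem_insert x J, G.dist_comm (u := x) ▸ hxv⟩
  · obtain ⟨j, hj, hvj⟩ := hdom v (mem_filter.mpr ⟨hv, by omega⟩)
    exact ⟨j, Set.mem_insert_of_mem x hj, hvj⟩

lemma mdiIn_pos [Finite V] (S : Finset V) : 0 < mdiIn G k S := by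
  obtain ⟨J, hJ, -⟩ := (Set.subsingleton_empty.dkIndep (G := G) (k := k)).exists_isMaxDkIndepIn
    (Set.empty_subset (S : Set V))
  exact (Set.ncard_pos (Set.toFinite _)).mpr ⟨J, hJ⟩

lemma mdiInContaining_pos [Finite V] {S : Finset V} {c : V} (hc : c ∈ S) :
    0 < mdiInContaining G k S c := by
  have hc' : DkIndep G k {c} := Set.subsingleton_singleton.dkIndep
  obtain ⟨J, hJ, hcJ⟩ := hc'.exists_isMaxDkIndepIn (S := S) (by simpa using hc)
  exact (Set.ncard_pos (Set.toFinite _)).mpr ⟨J, hJ, hcJ rfl⟩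

lemma two_le_mdiInContaining [Finite V] {S : Finset V} {u z z' : V} (hu : u ∈ S) (hz : z ∈ S)
    (hz' : z' ∈ S) (hzz' : z ≠ z') (hclose : G.dist z z' ≤ k) (huz : k < G.dist u z)
    (huz' : k < G.dist u z') : 2 ≤ mdiInContaining G k S u := by
  obtain ⟨J, hJ, hJuz⟩ := (dkIndep_pair huz).exists_isMaxDkIndepIn (S := S)
    (by simp [Set.insert_subset_iff, hu, hz])
  obtain ⟨J', hJ', hJ'uz'⟩ := (dkIndep_pair huz').exists_isMaxDkIndepIn (S := S)
    (by simp [Set.insert_subset_iff, hu, hz'])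
  have hne : J ≠ J' := by
    rintro rfl
    have := hJ.2.1 (hJuz (by simp)) (hJ'uz' (by simp)) hzz'
    omega
  rw [← Set.ncard_pair hne]
  refine Set.ncard_le_ncard (fun I hI => ?_) (Set.toFinite _)
  rcases hI with rfl | rfl
  · exact ⟨hJ, hJuz (by simp)⟩
  · exact ⟨hJ', hJ'uz' (by simp)⟩

end DistanceIndependence

section Trees

variable {V : Type*} {T : SimpleGraph V} {k : ℕ}

lemma SimpleGraph.IsTree.eq_of_mem_of_dist_le (hT : T.IsTree) {S : Finset V} {r x : V}
    (hfar : ∀ z ∈ S, T.dist r z ≤ T.dist r x) {J : Set V} (hJS : J ⊆ S) (hJ : DkIndep T k J)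
    {c c' : V} (hc : c ∈ J) (hc' : c' ∈ J) (hxc : T.dist x c ≤ k) (hxc' : T.dist x c' ≤ k) :
    c = c' := by
  by_contra hne
  have := hJ hc hc' hne
  have := hT.dist_le_max_of_dist_le (hfar c (hJS hc)) (hfar c' (hJS hc'))
  omega

variable [Fintype V] [DecidableEq V]

theorem SimpleGraph.IsTree.mdiIn_add_sum_le (hT : T.IsTree) {S : Finset V} {r x : V} (hx : x ∈ S)
    (hfar : ∀ z ∈ S, T.dist r z ≤ T.dist r x) :
    mdiIn T k {v ∈ S | k < T.dist x v} +
      ∑ c ∈ {v ∈ S | T.dist x v ≤ k}.erase x, mdiInContaining T k S c ≤ mdiIn T k S := by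
  set near : Finset V := {v ∈ S | T.dist x v ≤ k}
  have hdisj : (near : Set V).PairwiseDisjoint fun c => {J | IsMaxDkIndepIn T k S J ∧ c ∈ J} :=
    fun c hc c' hc' hne => Set.disjoint_left.mpr fun J hJc hJc' => hne <|
      hT.eq_of_mem_of_dist_le hfar hJc.1.1 hJc.1.2.1 hJc.2 hJc'.2 (mem_filter.mp hc).2
        (mem_filter.mp hc').2
  have hsum : ∑ c ∈ near, mdiInContaining T k S c ≤ mdiIn T k S := by
    calc _ = (⋃ c ∈ (near : Set V), {J | IsMaxDkIndepIn T k S J ∧ c ∈ J}).ncard := by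
          rw [(near.finite_toSet).ncard_biUnion (fun _ _ => Set.toFinite _) hdisj,
            finsum_mem_coe_finset]
          rfl
      _ ≤ mdiIn T k S := Set.ncard_le_ncard (Set.iUnion₂_subset fun c _ J hJ => hJ.1)
  have hxnot : ∀ J ∈ {J | IsMaxDkIndepIn T k {v ∈ S | k < T.dist x v} J}, x ∉ J :=
    fun J hJ hxJ => by simpa using (mem_filter.mp (hJ.1 hxJ)).2
  have hxsets : mdiIn T k {v ∈ S | k < T.dist x v} ≤ mdiInContaining T k S x := by
    refine Set.ncard_le_ncard_of_injOn (insert x)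
      (fun J hJ => ⟨IsMaxDkIndepIn.insert hx hJ, Set.mem_insert x J⟩) fun J hJ J' hJ' h => ?_
    rw [← Set.insert_sdiff_self_of_notMem (hxnot J hJ), h,
      Set.insert_sdiff_self_of_notMem (hxnot J' hJ')]
  rw [← add_sum_erase near _ (mem_filter.mpr ⟨hx, by simp⟩)] at hsum
  omega

lemma SimpleGraph.IsTree.exists_dkIndep_card_add_sum_le (hT : T.IsTree) {S : Finset V} {r x : V}
    (hx : x ∈ S) (hfar : ∀ z ∈ S, T.dist r z ≤ T.dist r x)
    (hfarSet : ∃ A ⊆ {v ∈ S | k < T.dist x v}, DkIndep T k ↑A ∧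
      #{v ∈ S | k < T.dist x v} + 1 ≤ mdiIn T k {v ∈ S | k < T.dist x v} + #A) :
    ∃ A ⊆ S, DkIndep T k ↑A ∧
      #S + 1 + ∑ c ∈ {v ∈ S | T.dist x v ≤ k}.erase x, mdiInContaining T k S c ≤
        mdiIn T k S + #A + #({v ∈ S | T.dist x v ≤ k}.erase x) := by
  obtain ⟨A, hAS, hA, hbound⟩ := hfarSet
  have hfarA : ∀ a ∈ (A : Set V), k < T.dist x a := fun a ha => (mem_filter.mp (hAS ha)).2
  have hxA : x ∉ A := fun hxA => by simpa using hfarA x hxA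
  refine ⟨insert x A, insert_subset hx fun a ha => (mem_filter.mp (hAS ha)).1,
    by simpa using hA.insert hfarA, ?_⟩
  have hsplit := S.card_filter_add_card_filter_not (T.dist x · ≤ k)
  simp only [not_le] at hsplit
  have hnear := card_erase_add_one (s := {v ∈ S | T.dist x v ≤ k})
    (mem_filter.mpr ⟨hx, (by simp : T.dist x x ≤ k)⟩)
  have hstep := hT.mdiIn_add_sum_le (k := k) hx hfar
  rw [card_insert_of_notMem hxA]
  omega

theorem SimpleGraph.IsTree.exists_dkIndep_card_add_one_le (hT : T.IsTree) (k : ℕ)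
    (S : Finset V) : ∃ A ⊆ S, DkIndep T k ↑A ∧ #S + 1 ≤ mdiIn T k S + #A := by
  induction S using Finset.strongInduction with
  | H S ih =>
  rcases S.eq_empty_or_nonempty with rfl | ⟨r, hr⟩
  · refine ⟨∅, subset_rfl, by simpa using Set.subsingleton_empty.dkIndep, ?_⟩
    simpa only [card_empty, zero_add, add_zero] using (mdiIn_pos (G := T) (k := k) ∅).nat_succ_le
  obtain ⟨x, hx, hfar⟩ := S.exists_max_image (T.dist r) ⟨r, hr⟩
  obtain ⟨A, hAS, hA, hbound⟩ := hT.exists_dkIndep_card_add_sum_le hx hfar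
    (ih _ (filter_ssubset.mpr ⟨x, hx, by simp⟩))
  have hsum := card_nsmul_le_sum ({v ∈ S | T.dist x v ≤ k}.erase x)
    (fun c => mdiInContaining T k S c) 1
    fun c hc => mdiInContaining_pos (mem_filter.mp (mem_of_mem_erase hc)).1
  rw [smul_eq_mul, mul_one] at hsum
  exact ⟨A, hAS, hA, by omega⟩

end Trees

section Packing

variable {V : Type*} {G : SimpleGraph V}

lemma SimpleGraph.Connected.le_card_filter_dist_le [Fintype V] (hG : G.Connected) {m : ℕ}
    {x y : V} (hxy : 2 * m ≤ G.dist x y) (a : V) : m + 1 ≤ #{v | G.dist a v ≤ m} := by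
  obtain ⟨e, he⟩ : ∃ e, m ≤ G.dist a e := by
    by_contra! h
    have := hG.dist_triangle (u := x) (v := a) (w := y)
    have := h x
    have := h y
    rw [G.dist_comm (u := a) (v := x)] at *
    omega
  obtain ⟨P, hP⟩ := hG.exists_walk_length_eq_dist a e
  have hdist : ∀ i ≤ m, G.dist a (P.getVert i) = i := fun i hi => by
    simpa using P.dist_getVert_getVert hP i.zero_le (by omega)
  calc m + 1 = #(range (m + 1)) := (card_range _).symm
    _ ≤ _ := card_le_card_of_injOn P.getVert
        (fun i hi => by simp [hdist i (Nat.lt_succ_iff.mp (mem_range.mp hi)),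
          Nat.lt_succ_iff.mp (mem_range.mp hi)])
        fun i hi j hj hij => by
          rw [coe_range, Set.mem_Iio] at hi hj
          rw [← hdist i (by omega), ← hdist j (by omega), hij]

lemma SimpleGraph.Connected.exists_forall_lt_dist (hG : G.Connected) {m : ℕ} {A : Set V}
    (hA : DkIndep G (2 * m + 1) A) {x y : V} (hxy : 2 * m < G.dist x y) :
    ∃ v, ∀ a ∈ A, m < G.dist a v := by
  by_contra! hcov
  choose f hfA hf using hcov
  -- Adjacent vertices covered by different `a, b ∈ A` would give `dist a b ≤ 2m + 1`.
  have hadj : ∀ v w, G.Adj v w → f v = f w := fun v w hvw => by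
    by_contra hne
    have := hA (hfA v) (hfA w) hne
    have := hG.dist_triangle (u := f v) (v := v) (w := f w)
    have := hG.dist_triangle (u := v) (v := w) (w := f w)
    have := SimpleGraph.dist_eq_one_iff_adj.mpr hvw
    have := hf v
    have := hf w
    simp only [G.dist_comm (u := w) (v := f w)] at *
    omega
  have hconst : ∀ {v w} (p : G.Walk v w), f v = f w := by
    intro v w p
    induction p with
    | nil => rfl
    | cons h _ ih => exact (hadj _ _ h).trans ih
  obtain ⟨p⟩ := hG.preconnected x y
  have := hG.dist_triangle (u := x) (v := f x) (w := y)
  have := hf x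
  have := hf y
  rw [← hconst p, G.dist_comm (u := f x) (v := x)] at *
  omega

theorem SimpleGraph.Connected.card_mul_add_one_le [Fintype V] [DecidableEq V]
    (hG : G.Connected) {m : ℕ} {A : Finset V} (hA : DkIndep G (2 * m + 1) ↑A) {x y : V}
    (hxy : 2 * m < G.dist x y) :
    #A * (m + 1) + 1 ≤ Fintype.card V := by
  obtain ⟨v, hv⟩ := hG.exists_forall_lt_dist hA hxy
  let ball (a : V) : Finset V := {w | G.dist a w ≤ m}
  have hdisj : (A : Set V).PairwiseDisjoint ball := fun a ha b hb hab =>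
    (Finset.disjoint_left (s := ball a) (t := ball b)).mpr fun w hwa hwb => by
      have := hA ha hb hab
      have := hG.dist_triangle (u := a) (v := w) (w := b)
      simp only [ball, mem_filter, mem_univ, true_and] at hwa hwb
      rw [G.dist_comm (u := w)] at *
      omega
  have hv' : v ∉ A.biUnion ball := by
    simpa [ball] using fun a ha => hv a ha
  calc #A * (m + 1) + 1 ≤ ∑ a ∈ A, #(ball a) + 1 := by
        have := card_nsmul_le_sum A (fun a => #(ball a)) (m + 1)
          fun a _ => hG.le_card_filter_dist_le (x := x) (y := y) (by omega) a
        rw [smul_eq_mul] at this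
        omega
    _ = #(insert v (A.biUnion ball)) := by rw [card_insert_of_notMem hv', card_biUnion hdisj]
    _ ≤ Fintype.card V := card_le_univ _

end Packing

section Diameter

variable {V : Type*} [Fintype V] (G : SimpleGraph V)

lemma dist_le_gdiam (u v : V) : G.dist u v ≤ gdiam G :=
  (le_sup (f := G.dist u) (mem_univ v)).trans (le_sup (f := ecc G) (mem_univ u))

lemma exists_dist_eq_gdiam [Nonempty V] : ∃ x y, G.dist x y = gdiam G := by
  obtain ⟨x, -, hx⟩ := exists_mem_eq_sup univ univ_nonempty (ecc G)
  obtain ⟨y, -, hy⟩ := exists_mem_eq_sup univ univ_nonempty (G.dist x)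
  exact ⟨x, y, by rw [gdiam, hx, ecc, hy]⟩

end Diameter

theorem SimpleGraph.IsTree.exists_dkIndep_card_add_two_le {V : Type*} [Fintype V] [DecidableEq V]
    {T : SimpleGraph V} (hT : T.IsTree) {k : ℕ} (hk : 0 < k) {x y : V}
    (hxy : k + 3 ≤ T.dist x y) (hfar : ∀ z, T.dist y z ≤ T.dist y x) :
    ∃ A : Finset V, DkIndep T k ↑A ∧ Fintype.card V + 2 ≤ mdi T k + #A := by
  obtain ⟨P, hP⟩ := hT.connected.exists_walk_length_eq_dist x y
  have hPd : ∀ i j, i ≤ j → j ≤ k + 3 → T.dist (P.getVert i) (P.getVert j) = j - i :=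
    fun i j hij hj => P.dist_getVert_getVert hP hij (by omega)
  have hx1 := hPd 0 1 (by omega) (by omega)
  rw [Walk.getVert_zero] at hx1
  have htwo : 2 ≤ mdiInContaining T k univ (P.getVert 1) := by
    have hzz' := hPd (k + 2) (k + 3) (by omega) le_rfl
    refine two_le_mdiInContaining (z := P.getVert (k + 2)) (z' := P.getVert (k + 3))
      (mem_univ _) (mem_univ _) (mem_univ _) (fun h => ?_) (by omega)
      (by rw [hPd 1 (k + 2) (by omega) (by omega)]; omega)
      (by rw [hPd 1 (k + 3) (by omega) le_rfl]; omega)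
    rw [h, SimpleGraph.dist_self] at hzz'
    omega
  have hmem : P.getVert 1 ∈ ({v ∈ univ | T.dist x v ≤ k} : Finset V).erase x :=
    mem_erase.mpr ⟨fun h => by rw [h, SimpleGraph.dist_self] at hx1; omega,
      mem_filter.mpr ⟨mem_univ _, by omega⟩⟩
  obtain ⟨A, -, hA, hbound⟩ := hT.exists_dkIndep_card_add_sum_le (mem_univ x)
    (fun z _ => hfar z) (hT.exists_dkIndep_card_add_one_le k _)
  have hothers := card_nsmul_le_sum (({v ∈ univ | T.dist x v ≤ k} : Finset V).erase x |>.erase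
    (P.getVert 1)) (fun c => mdiInContaining T k univ c) 1
    fun c hc => mdiInContaining_pos (mem_univ c)
  rw [smul_eq_mul, mul_one, card_erase_of_mem hmem] at hothers
  rw [← add_sum_erase _ _ hmem] at hbound
  have hnear := card_pos.mpr ⟨_, hmem⟩
  refine ⟨A, hA, ?_⟩
  rw [mdi_eq_mdiIn_univ, ← card_univ]
  omega

theorem stmt_17_general (k : ℕ) (hodd : Odd k) {V : Type} [Fintype V]
    {n : ℕ} (hn : Fintype.card V = n) (T : SimpleGraph V) (hT : T.IsTree)
    (hdiam : k + 3 ≤ gdiam T) :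
    fk k n < mdi T k := by
  classical
  obtain ⟨m, rfl⟩ := hodd
  have := hT.connected.nonempty
  obtain ⟨x, y, hxy⟩ := exists_dist_eq_gdiam T
  have hfar : ∀ z, T.dist y z ≤ T.dist y x := fun z =>
    T.dist_comm (u := x) ▸ hxy ▸ dist_le_gdiam T y z
  obtain ⟨A, hA, hcount⟩ := hT.exists_dkIndep_card_add_two_le (by omega) (hxy ▸ hdiam) hfar
  have hpack := hT.connected.card_mul_add_one_le hA (x := x) (y := y) (by omega)
  have hpair := hT.connected.card_mul_add_one_le (A := {x, y}) (x := x) (y := y)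
    (by simpa using dkIndep_pair (G := T) (k := 2 * m + 1) (a := x) (b := y) (by omega)) (by omega)
  rw [card_pair fun h => by rw [h, SimpleGraph.dist_self] at hxy; omega] at hpair
  have hAq : #A ≤ (n - 1) / (m + 1) := (Nat.le_div_iff_mul_le (by omega)).mpr (by omega)
  have := Nat.div_le_self (n - 1) (m + 1)
  rw [fk, if_neg (by omega), show (2 * m + 1) % 2 = 1 by omega, show (2 * m + 1) / 2 = m by omega]
  omega

/-- Let `k ≥ 3` be odd and let `T` be a tree on `n` vertices of diameter
at least `k + 3`. Then `mdi_k(T) > f_k(n)`. -/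
theorem stmt_17 (k : ℕ) (hk : 3 ≤ k) (hodd : Odd k) {V : Type} [Fintype V]
    {n : ℕ} (hn : Fintype.card V = n) (T : SimpleGraph V) (hT : T.IsTree)
    (hdiam : k + 3 ≤ gdiam T) :
    fk k n < mdi T k :=
  stmt_17_general k hodd hn T hT hdiam
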